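/- arXiv:2103.03320 — 5 statements merged into one kernel-verified Lean document; each statement's English description precedes it below -/
import Mathlib

section
/- Let A be a bounded selfadjoint operator on a complex Hilbert space ℋ, and let P, Q be orthogonal projections (bounded selfadjoint idempotents) on ℋ with PQ = 0, AP = PA and AQ = QA. Then for all r, s ∈ ℝ the operator rAP + sAQ is bounded selfadjoint, and for every continuous function χ : ℝ → ℝ one has χ(rAP + sAQ) = χ(rA)∘P + χ(sA)∘Q + χ(0)·(1 − P − Q); in particular χ(rAP + sAQ)∘(P + Q) = χ(rA)∘P + χ(sA)∘Q. -/
/-!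
Put `R = 1 - P - Q`. Then `P, Q, R` is a complete family of orthogonal projections commuting with
`rA, sA, 0` respectively, so `rAP + sAQ = rA·P + sA·Q + 0·R` is block diagonal. For such an
element `T = ∑ aᵢ eᵢ` and a compact `K` containing all the spectra, `f ↦ ∑ f(aᵢ) eᵢ` is a
continuous algebra homomorphism on `C(K, ℝ)` sending the identity to `T`; by Stone–Weierstrass it
is the functional calculus of `T`. The block `0·R` contributes `χ(0)·R`.
-/

open Polynomial

section

variable {ι R B A : Type*} [Fintype ι] [CommSemiring R] [Semiring B] [Algebra R B]
  [Semiring A] [Algebra R A] {e : ι → A}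

lemma OrthogonalIdempotents.sum_mul_mul (he : OrthogonalIdempotents e) (x : ι → A) (j : ι) :
    (∑ i, x i * e i) * e j = x j * e j := by
  classical
  simp only [Finset.sum_mul, mul_assoc, he.mul_eq, mul_ite, mul_zero, Finset.sum_ite_eq',
    Finset.mem_univ, if_true]

noncomputable def CompleteOrthogonalIdempotents.sumAlgHom (he : CompleteOrthogonalIdempotents e)
    (φ : ι → B →ₐ[R] A) (hφ : ∀ i b, Commute (φ i b) (e i)) : B →ₐ[R] A where
  toFun b := ∑ i, φ i b * e i
  map_one' := by simp [he.complete]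
  map_mul' x y := by
    rw [Finset.mul_sum]
    refine Finset.sum_congr rfl fun j _ => ?_
    rw [map_mul, (hφ j y).eq, ← mul_assoc, he.sum_mul_mul, mul_assoc,
      mul_assoc, (hφ j y).eq]
  map_zero' := by simp
  map_add' x y := by simp [add_mul, Finset.sum_add_distrib]
  commutes' r := by simp [← Finset.mul_sum, he.complete]

@[simp]
lemma CompleteOrthogonalIdempotents.sumAlgHom_apply (he : CompleteOrthogonalIdempotents e)
    (φ : ι → B →ₐ[R] A) (hφ : ∀ i b, Commute (φ i b) (e i)) (b : B) :
    he.sumAlgHom φ hφ b = ∑ i, φ i b * e i :=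
  rfl

end

lemma CompleteOrthogonalIdempotents.of_orthogonal_pair {A : Type*} [Ring A] {p q : A}
    (hp : IsIdempotentElem p) (hq : IsIdempotentElem q) (hpq : p * q = 0) (hqp : q * p = 0) :
    CompleteOrthogonalIdempotents ![p, q, 1 - p - q] := by
  refine CompleteOrthogonalIdempotents.iff_ortho_complete.mpr ⟨fun i j hij => ?_, ?_⟩
  · fin_cases i <;> fin_cases j <;> simp_all [sub_mul, mul_sub, hp.eq, hq.eq]
  · simp [Fin.sum_univ_three]

lemma isSelfAdjoint_sum_mul {ι A : Type*} [NonUnitalSemiring A] [StarRing A] (s : Finset ι)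
    {a e : ι → A} (ha : ∀ i, IsSelfAdjoint (a i)) (he : ∀ i, IsSelfAdjoint (e i))
    (hae : ∀ i, Commute (a i) (e i)) :
    IsSelfAdjoint (∑ i ∈ s, a i * e i) :=
  isSelfAdjoint_sum _ fun i _ => ((ha i).commute_iff (he i)).mp (hae i)

lemma cfcHomSuperset_restrict {R A : Type*} {p : A → Prop} [CommSemiring R] [StarRing R]
    [MetricSpace R] [IsTopologicalSemiring R] [ContinuousStar R] [Ring A] [StarRing A]
    [TopologicalSpace A] [Algebra R A] [ContinuousFunctionalCalculus R A p] {a : A} (ha : p a)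
    {s : Set R} (hs : spectrum R a ⊆ s) (f : C(R, R)) :
    cfcHomSuperset ha hs (f.restrict s) = cfc f a := by
  rw [cfc_apply f a ha]
  rfl

section

variable {ι A : Type*} [Fintype ι] [Ring A] [StarRing A] [TopologicalSpace A] [Algebra ℝ A]
  [ContinuousFunctionalCalculus ℝ A IsSelfAdjoint] [IsTopologicalRing A] [T2Space A]

lemma IsSelfAdjoint.commute_cfcHomSuperset {a b : A} (ha : IsSelfAdjoint a) {s : Set ℝ}
    (hs : spectrum ℝ a ⊆ s) (hab : Commute a b) (g : C(s, ℝ)) :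
    Commute (cfcHomSuperset ha hs g) b := by
  rw [cfcHomSuperset_apply]
  exact ha.commute_cfcHom ha hab _

theorem cfc_sum_mul_of_completeOrthogonalIdempotents {a e : ι → A}
    (he : CompleteOrthogonalIdempotents e) (he_sa : ∀ i, IsSelfAdjoint (e i))
    (ha : ∀ i, IsSelfAdjoint (a i)) (hae : ∀ i, Commute (a i) (e i)) (f : ℝ → ℝ)
    (hf : Continuous f) :
    cfc f (∑ i, a i * e i) = ∑ i, cfc f (a i) * e i := by
  have hT := isSelfAdjoint_sum_mul Finset.univ ha he_sa hae
  -- a common domain for the calculi of all the elements involved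
  set K := spectrum ℝ (∑ i, a i * e i) ∪ ⋃ i, spectrum ℝ (a i)
  have : CompactSpace K := isCompact_iff_compactSpace.mp <|
    (ContinuousFunctionalCalculus.isCompact_spectrum _).union <|
      isCompact_iUnion fun i => ContinuousFunctionalCalculus.isCompact_spectrum _
  have hTK : spectrum ℝ (∑ i, a i * e i) ⊆ K := Set.subset_union_left
  have haK i : spectrum ℝ (a i) ⊆ K :=
    Set.subset_union_of_subset_right (Set.subset_iUnion (fun i => spectrum ℝ (a i)) i) _
  have key : (cfcHomSuperset hT hTK).toAlgHom =
      he.sumAlgHom (fun i => (cfcHomSuperset (ha i) (haK i)).toAlgHom)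
        fun i => (ha i).commute_cfcHomSuperset (haK i) (hae i) := by
    refine ContinuousMap.algHom_ext_map_X (cfcHomSuperset_continuous hT hTK) ?_ ?_
    · exact continuous_finsetSum _ fun i _ =>
        (cfcHomSuperset_continuous (ha i) (haK i)).mul continuous_const
    · simp only [CompleteOrthogonalIdempotents.sumAlgHom_apply, toContinuousMapOnAlgHom_apply,
        toContinuousMapOn_X_eq_restrict_id, StarAlgHom.coe_toAlgHom, cfcHomSuperset_id]
  simpa only [StarAlgHom.coe_toAlgHom, CompleteOrthogonalIdempotents.sumAlgHom_apply,
    cfcHomSuperset_restrict, ContinuousMap.coe_mk] using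
    congr($key ((⟨f, hf⟩ : C(ℝ, ℝ)).restrict K))

end

/-- Let `A` be a bounded selfadjoint operator on a complex Hilbert space `ℋ`,
and let `P`, `Q` be orthogonal projections on `ℋ` with `PQ = 0`, `AP = PA` and `AQ = QA`. Then
for all `r, s ∈ ℝ` the operator `rAP + sAQ` is bounded selfadjoint, and for every continuous
`χ : ℝ → ℝ` one has
`χ(rAP + sAQ) = χ(rA)P + χ(sA)Q + χ(0)·(1 − P − Q)`;
in particular `χ(rAP + sAQ)(P + Q) = χ(rA)P + χ(sA)Q`. -/
theorem stmt_1
    {ℋ : Type*} [NormedAddCommGroup ℋ] [InnerProductSpace ℂ ℋ] [CompleteSpace ℋ]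
    (A P Q : ℋ →L[ℂ] ℋ) (hA : IsSelfAdjoint A)
    (hP : IsSelfAdjoint P) (hPidem : P * P = P)
    (hQ : IsSelfAdjoint Q) (hQidem : Q * Q = Q)
    (hPQ : P * Q = 0)
    (hAP : A * P = P * A) (hAQ : A * Q = Q * A)
    (r s : ℝ) :
    IsSelfAdjoint ((r : ℂ) • (A * P) + (s : ℂ) • (A * Q)) ∧
      ∀ χ : ℝ → ℝ, Continuous χ →
        cfc χ ((r : ℂ) • (A * P) + (s : ℂ) • (A * Q)) =
            cfc χ ((r : ℂ) • A) * P + cfc χ ((s : ℂ) • A) * Q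
              + (χ 0 : ℂ) • (1 - P - Q) ∧
          cfc χ ((r : ℂ) • (A * P) + (s : ℂ) • (A * Q)) * (P + Q) =
            cfc χ ((r : ℂ) • A) * P + cfc χ ((s : ℂ) • A) * Q := by
  have hQP : Q * P = 0 := by simpa [hP.star_eq, hQ.star_eq] using congr(star $hPQ)
  set a : Fin 3 → ℋ →L[ℂ] ℋ := ![(r : ℂ) • A, (s : ℂ) • A, 0]
  set e : Fin 3 → ℋ →L[ℂ] ℋ := ![P, Q, 1 - P - Q]
  have he : CompleteOrthogonalIdempotents e := .of_orthogonal_pair hPidem hQidem hPQ hQP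
  have he_sa i : IsSelfAdjoint (e i) := by
    fin_cases i
    exacts [hP, hQ, ((IsSelfAdjoint.one _).sub hP).sub hQ]
  have hA_smul (t : ℝ) : IsSelfAdjoint ((t : ℂ) • A) :=
    IsSelfAdjoint.smul (R := ℂ)
      ((Complex.im_eq_zero_iff_isSelfAdjoint _).mp (Complex.ofReal_im t)) hA
  have ha i : IsSelfAdjoint (a i) := by
    fin_cases i
    exacts [hA_smul r, hA_smul s, .zero _]
  have hae i : Commute (a i) (e i) := by
    fin_cases i
    exacts [Commute.smul_left hAP _, Commute.smul_left hAQ _, .zero_left _]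
  have hT : (r : ℂ) • (A * P) + (s : ℂ) • (A * Q) = ∑ i, a i * e i := by
    simp [a, e, Fin.sum_univ_three]
  have hcfc := cfc_sum_mul_of_completeOrthogonalIdempotents he he_sa ha hae
  refine ⟨hT ▸ isSelfAdjoint_sum_mul _ ha he_sa hae, fun χ hχ => ⟨?_, ?_⟩⟩
  · rw [hT, hcfc χ hχ, Fin.sum_univ_three]
    simp [a, e, Algebra.algebraMap_eq_smul_one]
  · rw [hT, hcfc χ hχ, mul_add]
    exact congr($(he.sum_mul_mul (fun i => cfc χ (a i)) 0) +
      $(he.sum_mul_mul (fun i => cfc χ (a i)) 1))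
end

section
/- Let T be a bounded operator on ℌ. Then T is a 2-point operator satisfying T ∘ U_φ = U_φ ∘ T for all φ ∈ ℝ if and only if there exists a bounded operator s on 𝔥 with 0 ≤ s ≤ 1 such that T(f, g) = ((1 − s)f, ζ(s(ζg))) for all (f, g) ∈ ℌ. -/
noncomputable section

/-- `𝔥 := ℓ²(ℤ)`, the Hilbert space of square-summable complex-valued functions on `ℤ`. -/
abbrev smallH : Type := lp (fun _ : ℤ => ℂ) 2

/-- `ℌ := 𝔥 ⊕ 𝔥`, the Hilbert space direct sum of `𝔥` with itself. -/
abbrev bigH : Type := WithLp 2 (smallH × smallH)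

/-- `ζ`, the coordinatewise complex conjugation on `𝔥`. -/
def zeta (f : smallH) : smallH := star f

/-- Identification of an element of `ℌ` with a pair. -/
def toPair (x : bigH) : smallH × smallH := WithLp.equiv 2 (smallH × smallH) x

/-- Identification of a pair with an element of `ℌ`. -/
def ofPair (p : smallH × smallH) : bigH := (WithLp.equiv 2 (smallH × smallH)).symm p

/-- The conjugation `Γ(f, g) := (ζg, ζf)` on `ℌ`. -/
def Gamma (x : bigH) : bigH := ofPair (zeta (toPair x).2, zeta (toPair x).1)

/-- A bounded operator `T` on `ℌ` is a 2-point operator if `T* = T`, `Γ∘T∘Γ = 1 − T` and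
`0 ≤ T ≤ 1`. -/
def IsTwoPoint (T : bigH →L[ℂ] bigH) : Prop :=
  IsSelfAdjoint T ∧ (∀ x : bigH, Gamma (T (Gamma x)) = x - T x) ∧
    T.IsPositive ∧ ((1 : bigH →L[ℂ] bigH) - T).IsPositive

/-- `T` commutes with all gauge transformations `U_φ(f, g) := (e^{iφ}f, e^{−iφ}g)`. -/
def GaugeInvariant (T : bigH →L[ℂ] bigH) : Prop :=
  ∀ (φ : ℝ) (f g : smallH),
    toPair (T (ofPair
        (Complex.exp (Complex.I * φ) • f, Complex.exp (-(Complex.I * φ)) • g))) =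
      (Complex.exp (Complex.I * φ) • (toPair (T (ofPair (f, g)))).1,
        Complex.exp (-(Complex.I * φ)) • (toPair (T (ofPair (f, g)))).2)

/-! Gauge invariance at `φ = π/2` says that `T` commutes with `diag(i, -i)`, which forces `T` to be
block diagonal, `T = diag(a, b)`. For block-diagonal operators everything is computed blockwise:
`diag(a, b)` is positive iff `a` and `b` are, `1 - diag(a, b) = diag(1 - a, 1 - b)`, and
`Γ diag(a, b) Γ = diag(ζbζ, ζaζ)`. Hence the relation `ΓTΓ = 1 - T` says exactly `b = ζ(1 - a)ζ`,
and `s := 1 - a`. -/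

open ContinuousLinearMap
open scoped InnerProductSpace ComplexOrder

section BlockDiag

variable {𝕜 E F : Type*} [RCLike 𝕜] [NormedAddCommGroup E] [InnerProductSpace 𝕜 E]
  [NormedAddCommGroup F] [InnerProductSpace 𝕜 F]

def blockDiag (a : E →L[𝕜] E) (b : F →L[𝕜] F) : WithLp 2 (E × F) →L[𝕜] WithLp 2 (E × F) :=
  ((WithLp.prodContinuousLinearEquiv 2 𝕜 E F).symm : E × F →L[𝕜] WithLp 2 (E × F)).comp
    ((a.prodMap b).comp
      (WithLp.prodContinuousLinearEquiv 2 𝕜 E F : WithLp 2 (E × F) →L[𝕜] E × F))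

@[simp]
lemma ofLp_blockDiag (a : E →L[𝕜] E) (b : F →L[𝕜] F) (x : WithLp 2 (E × F)) :
    (blockDiag a b x).ofLp = (a x.ofLp.1, b x.ofLp.2) := rfl

lemma blockDiag_inj {a a' : E →L[𝕜] E} {b b' : F →L[𝕜] F} :
    blockDiag a b = blockDiag a' b' ↔ a = a' ∧ b = b' := by
  refine ⟨fun h => ⟨ext fun f => ?_, ext fun g => ?_⟩, fun ⟨rfl, rfl⟩ => rfl⟩
  · simpa using congr_arg (fun T => (T (WithLp.toLp 2 (f, 0))).ofLp.1) h
  · simpa using congr_arg (fun T => (T (WithLp.toLp 2 (0, g))).ofLp.2) h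

lemma one_sub_blockDiag (a : E →L[𝕜] E) (b : F →L[𝕜] F) :
    1 - blockDiag a b = blockDiag (1 - a) (1 - b) := rfl

lemma inner_blockDiag_left (a : E →L[𝕜] E) (b : F →L[𝕜] F) (x y : WithLp 2 (E × F)) :
    inner 𝕜 (blockDiag a b x) y = inner 𝕜 (a x.ofLp.1) y.ofLp.1 + inner 𝕜 (b x.ofLp.2) y.ofLp.2 :=
  rfl

lemma inner_blockDiag_right (a : E →L[𝕜] E) (b : F →L[𝕜] F) (x y : WithLp 2 (E × F)) :
    inner 𝕜 x (blockDiag a b y) = inner 𝕜 x.ofLp.1 (a y.ofLp.1) + inner 𝕜 x.ofLp.2 (b y.ofLp.2) :=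
  rfl

lemma isPositive_blockDiag_iff {a : E →L[𝕜] E} {b : F →L[𝕜] F} :
    (blockDiag a b).IsPositive ↔ a.IsPositive ∧ b.IsPositive := by
  simp only [isPositive_iff, LinearMap.IsSymmetric, coe_coe, inner_blockDiag_left,
    inner_blockDiag_right]
  constructor
  · rintro ⟨hsymm, hnonneg⟩
    refine ⟨⟨fun x y => ?_, fun x => ?_⟩, ⟨fun x y => ?_, fun x => ?_⟩⟩
    · simpa using hsymm (WithLp.toLp 2 (x, 0)) (WithLp.toLp 2 (y, 0))
    · simpa using hnonneg (WithLp.toLp 2 (x, 0))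
    · simpa using hsymm (WithLp.toLp 2 (0, x)) (WithLp.toLp 2 (0, y))
    · simpa using hnonneg (WithLp.toLp 2 (0, x))
  · rintro ⟨⟨ha, ha'⟩, ⟨hb, hb'⟩⟩
    exact ⟨fun x y => by rw [ha, hb], fun x => add_nonneg (ha' _) (hb' _)⟩

end BlockDiag

lemma zeta_zeta (f : smallH) : zeta (zeta f) = f := star_star f

lemma inner_zeta_zeta (f g : smallH) : ⟪zeta f, zeta g⟫_ℂ = ⟪g, f⟫_ℂ := by
  rw [lp.inner_eq_tsum, lp.inner_eq_tsum]
  refine tsum_congr fun i => ?_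
  simp [zeta, lp.star_apply, RCLike.inner_apply, mul_comm]

lemma inner_zeta_left (f g : smallH) : ⟪zeta f, g⟫_ℂ = ⟪zeta g, f⟫_ℂ := by
  rw [← inner_zeta_zeta, zeta_zeta]

def zetaConj (s : smallH →L[ℂ] smallH) : smallH →L[ℂ] smallH :=
  ((starL ℂ : smallH ≃L⋆[ℂ] smallH) : smallH →L⋆[ℂ] smallH).comp
    (s.comp ((starL ℂ : smallH ≃L⋆[ℂ] smallH) : smallH →L⋆[ℂ] smallH))

lemma zetaConj_apply (s : smallH →L[ℂ] smallH) (f : smallH) :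
    zetaConj s f = zeta (s (zeta f)) := rfl

lemma zetaConj_zetaConj (s : smallH →L[ℂ] smallH) : zetaConj (zetaConj s) = s := by
  ext1 f; simp only [zetaConj_apply, zeta_zeta]

lemma zetaConj_one_sub (s : smallH →L[ℂ] smallH) : zetaConj (1 - s) = 1 - zetaConj s := by
  ext1 f; simp [zetaConj_apply, zeta, star_sub]

lemma ContinuousLinearMap.IsPositive.zetaConj {s : smallH →L[ℂ] smallH} (hs : s.IsPositive) :
    (zetaConj s).IsPositive := by
  refine ⟨fun f g => ?_, fun f => ?_⟩
  · simp only [coe_coe, zetaConj_apply]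
    rw [inner_zeta_left, ← hs.inner_left_eq_inner_right, ← inner_zeta_zeta, zeta_zeta]
  · rw [reApplyInnerSelf_apply, zetaConj_apply, inner_zeta_left]
    exact hs.re_inner_nonneg_right _

lemma Gamma_blockDiag_Gamma (a b : smallH →L[ℂ] smallH) (x : bigH) :
    Gamma (blockDiag a b (Gamma x)) = blockDiag (zetaConj b) (zetaConj a) x := rfl

lemma Gamma_blockDiag_Gamma_eq_sub_iff {a b : smallH →L[ℂ] smallH} :
    (∀ x, Gamma (blockDiag a b (Gamma x)) = x - blockDiag a b x) ↔ b = zetaConj (1 - a) := by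
  simp_rw [Gamma_blockDiag_Gamma]
  change (∀ x, _ = (1 - blockDiag a b) x) ↔ _
  rw [one_sub_blockDiag, ← ContinuousLinearMap.ext_iff, blockDiag_inj]
  constructor
  · rintro ⟨h, -⟩
    rw [← h, zetaConj_zetaConj]
  · rintro rfl
    rw [zetaConj_zetaConj, zetaConj_one_sub, sub_sub_cancel]
    exact ⟨rfl, rfl⟩

lemma GaugeInvariant.apply_I_smul {T : bigH →L[ℂ] bigH} (hT : GaugeInvariant T) (f g : smallH) :
    toPair (T (ofPair (Complex.I • f, -Complex.I • g))) =
      (Complex.I • (toPair (T (ofPair (f, g)))).1,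
        -Complex.I • (toPair (T (ofPair (f, g)))).2) := by
  have hexp : Complex.exp (Complex.I * ((Real.pi / 2 : ℝ) : ℂ)) = Complex.I := by
    rw [mul_comm]; push_cast; exact Complex.exp_pi_div_two_mul_I
  simpa only [Complex.exp_neg, hexp, Complex.inv_I] using hT (Real.pi / 2) f g

lemma eq_zero_of_I_smul_eq_neg_I_smul {M : Type*} [AddCommGroup M] [Module ℂ M] {y : M}
    (h : Complex.I • y = -Complex.I • y) : y = 0 := by
  have h2 : (2 * Complex.I) • y = 0 := by
    rw [two_mul, add_smul]
    nth_rw 1 [h]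
    rw [neg_smul, neg_add_cancel]
  exact (smul_eq_zero.1 h2).resolve_left (by simp)

lemma GaugeInvariant.exists_eq_blockDiag {T : bigH →L[ℂ] bigH} (hT : GaugeInvariant T) :
    ∃ a b : smallH →L[ℂ] smallH, T = blockDiag a b := by
  have snd_inl : ∀ f, (toPair (T (ofPair (f, 0)))).2 = 0 := fun f => by
    have h := congr_arg Prod.snd (hT.apply_I_smul f 0)
    have hx : ofPair (Complex.I • f, -Complex.I • 0) = Complex.I • ofPair (f, 0) := by
      simp [ofPair, ← WithLp.toLp_smul]
    rw [hx, map_smul] at h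
    exact eq_zero_of_I_smul_eq_neg_I_smul h
  have fst_inr : ∀ g, (toPair (T (ofPair (0, g)))).1 = 0 := fun g => by
    have h := congr_arg Prod.fst (hT.apply_I_smul 0 g)
    have hx : ofPair (Complex.I • 0, -Complex.I • g) = (-Complex.I) • ofPair (0, g) := by
      simp [ofPair, ← WithLp.toLp_smul, ← WithLp.toLp_neg]
    rw [hx, map_smul] at h
    exact eq_zero_of_I_smul_eq_neg_I_smul h.symm
  let e := (WithLp.prodContinuousLinearEquiv 2 ℂ smallH smallH : bigH →L[ℂ] smallH × smallH)
  let e' :=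
    ((WithLp.prodContinuousLinearEquiv 2 ℂ smallH smallH).symm : smallH × smallH →L[ℂ] bigH)
  refine ⟨fst ℂ _ _ ∘L e ∘L T ∘L e' ∘L inl ℂ _ _, snd ℂ _ _ ∘L e ∘L T ∘L e' ∘L inr ℂ _ _, ?_⟩
  ext1 x
  obtain ⟨⟨f, g⟩, rfl⟩ : ∃ p, x = ofPair p := ⟨x.ofLp, rfl⟩
  have hsplit : T (ofPair (f, g)) = T (ofPair (f, 0)) + T (ofPair (0, g)) := by
    rw [← map_add]; simp [ofPair, ← WithLp.toLp_add]
  apply WithLp.ofLp_injective 2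
  rw [hsplit]
  refine Prod.ext ?_ ?_
  · show (toPair (T (ofPair (f, 0)))).1 + (toPair (T (ofPair (0, g)))).1 =
      (toPair (T (ofPair (f, 0)))).1
    rw [fst_inr, add_zero]
  · show (toPair (T (ofPair (f, 0)))).2 + (toPair (T (ofPair (0, g)))).2 =
      (toPair (T (ofPair (0, g)))).2
    rw [snd_inl, zero_add]

lemma gaugeInvariant_blockDiag (a b : smallH →L[ℂ] smallH) : GaugeInvariant (blockDiag a b) :=
  fun _ f g => Prod.ext (map_smul a _ f) (map_smul b _ g)

/-- `T` is a 2-point operator commuting with all gauge transformations `U_φ`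
if and only if there exists a bounded operator `s` on `𝔥` with `0 ≤ s ≤ 1` such that
`T(f, g) = ((1 − s)f, ζ(s(ζg)))` for all `(f, g) ∈ ℌ`. -/
theorem stmt_4 (T : bigH →L[ℂ] bigH) :
    (IsTwoPoint T ∧ GaugeInvariant T) ↔
      ∃ s : smallH →L[ℂ] smallH,
        s.IsPositive ∧ ((1 : smallH →L[ℂ] smallH) - s).IsPositive ∧
        ∀ f g : smallH,
          toPair (T (ofPair (f, g))) =
            (((1 : smallH →L[ℂ] smallH) - s) f, zeta (s (zeta g))) := by
  constructor
  · rintro ⟨⟨-, hΓ, hT, hT'⟩, hgauge⟩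
    obtain ⟨a, b, rfl⟩ := hgauge.exists_eq_blockDiag
    obtain rfl := Gamma_blockDiag_Gamma_eq_sub_iff.1 hΓ
    rw [one_sub_blockDiag, isPositive_blockDiag_iff] at hT'
    refine ⟨1 - a, hT'.1, ?_, fun f g => ?_⟩
    · rw [sub_sub_cancel]
      exact (isPositive_blockDiag_iff.1 hT).1
    · rw [sub_sub_cancel]
      rfl
  · rintro ⟨s, hs, hs', hTs⟩
    obtain rfl : T = blockDiag (1 - s) (zetaConj s) :=
      ext fun x => WithLp.ofLp_injective 2 (by exact hTs x.ofLp.1 x.ofLp.2)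
    have hpos := isPositive_blockDiag_iff.2 ⟨hs', hs.zetaConj⟩
    refine ⟨⟨hpos.isSelfAdjoint, ?_, hpos, ?_⟩, gaugeInvariant_blockDiag _ _⟩
    · rw [Gamma_blockDiag_Gamma_eq_sub_iff, sub_sub_cancel]
    · rw [one_sub_blockDiag, sub_sub_cancel, ← zetaConj_one_sub, isPositive_blockDiag_iff]
      exact ⟨hs, hs'.zetaConj⟩
end
end

section
/- Let u₀, w₀ ∈ ℝ and u, w ∈ ℝ³, and set M := u₀σ₀ + u·σ and N := w₀σ₀ + w·σ. Then the limit as t → ∞ of (1/t)·∫₀ᵗ exp(−isM)·N·exp(isM) ds exists in the 2×2 complex matrices and equals w₀σ₀ + v·σ, where v := ((u·w)/‖u‖²)·u if u ≠ 0 and v := w if u = 0. -/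
/-! Write `M = u₀ + A` and `N = Q + P` with `A = u·σ`, `Q = w₀ + v·σ` and `P = (w - v)·σ`.
The scalar `u₀` drops out of the conjugation; `Q` commutes with `A`, and since `w - v ⊥ u` and
`{x·σ, y·σ} = 2 (x·y)`, `P` anticommutes with `A`. Hence `exp(-isM) N exp(isM) = Q + exp(-2isA) P`.
As `A² = ‖u‖²`, `P = -2iA R` for some `R` (when `u = 0` because then `P = 0`), so
`s ↦ exp(-2isA) P` has the antiderivative `s ↦ exp(-2isA) R`, which is bounded because
`exp(-2isA)` is unitary, so its Cesàro mean tends to `0`. -/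

noncomputable section

open Matrix Filter

attribute [local instance] Matrix.linftyOpNormedAddCommGroup Matrix.linftyOpNormedSpace

/-- The Pauli matrix `σ₁`. -/
def pauli1 : Matrix (Fin 2) (Fin 2) ℂ := !![0, 1; 1, 0]

/-- The Pauli matrix `σ₂`. -/
def pauli2 : Matrix (Fin 2) (Fin 2) ℂ := !![0, -Complex.I; Complex.I, 0]

/-- The Pauli matrix `σ₃`. -/
def pauli3 : Matrix (Fin 2) (Fin 2) ℂ := !![1, 0; 0, -1]

/-- `u·σ := u₁σ₁ + u₂σ₂ + u₃σ₃` for `u ∈ ℝ³`. -/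
def pauliVec (u : EuclideanSpace ℝ (Fin 3)) : Matrix (Fin 2) (Fin 2) ℂ :=
  (u 0 : ℂ) • pauli1 + (u 1 : ℂ) • pauli2 + (u 2 : ℂ) • pauli3

attribute [local instance] Matrix.linftyOpNormedRing Matrix.linftyOpNormedAlgebra

open NormedSpace Topology

section Cesaro

variable {E : Type*} [NormedAddCommGroup E] [NormedSpace ℝ E] [CompleteSpace E]

theorem tendsto_smul_intervalIntegral_of_hasDerivAt {f F : ℝ → E} {c : E}
    (hF : ∀ s, HasDerivAt F (f s) s) (hf : Continuous f) (hbdd : ∃ K, ∀ t, ‖F t - t • c‖ ≤ K) :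
    Tendsto (fun t : ℝ => (1 / t) • ∫ s in (0 : ℝ)..t, f s) atTop (𝓝 c) := by
  obtain ⟨K, hK⟩ := hbdd
  have hinv : Tendsto (fun t : ℝ => 1 / t) atTop (𝓝 0) := by
    simpa only [one_div] using tendsto_inv_atTop_zero
  have hrem : Tendsto (fun t : ℝ => (1 / t) • (F t - t • c - F 0)) atTop (𝓝 0) :=
    hinv.zero_smul_isBoundedUnder_le ⟨K + ‖F 0‖, eventually_map.2 (Eventually.of_forall
      fun t => (norm_sub_le _ _).trans (add_le_add_left (hK t) _))⟩
  have hlim : Tendsto (fun t : ℝ => c + (1 / t) • (F t - t • c - F 0)) atTop (𝓝 c) := by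
    simpa using hrem.const_add c
  refine hlim.congr' ?_
  filter_upwards [eventually_ne_atTop 0] with t ht
  rw [intervalIntegral.integral_eq_sub_of_hasDerivAt (fun s _ => hF s) (hf.intervalIntegrable 0 t),
    smul_sub, smul_sub, smul_sub, smul_smul, one_div_mul_cancel ht, one_smul]
  abel

end Cesaro

section BanachAlgebra

variable {𝔸 : Type*} [NormedRing 𝔸]

theorem exp_neg_mul_mul_exp_smul_one_add {𝕂 : Type*} [CommSemiring 𝕂] [Algebra 𝕂 𝔸]
    [NormedAlgebra ℚ 𝔸] [CompleteSpace 𝔸] (c : 𝕂) (X N : 𝔸) :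
    exp (-(c • (1 : 𝔸) + X)) * N * exp (c • 1 + X) = exp (-X) * N * exp X := by
  have hc : ∀ Y : 𝔸, Commute (c • 1) Y := fun Y => (Commute.one_left Y).smul_left c
  rw [neg_add, NormedSpace.exp_add_of_commute (hc X).neg_left.neg_right,
    NormedSpace.exp_add_of_commute (hc X), ((hc X).exp_left.exp_right).eq]
  simpa only [mul_assoc] using (hc (exp (-X) * N * exp X)).symm.exp_neg_mul_mul_exp_eq_self

theorem exp_neg_mul_add_mul_exp [NormedAlgebra ℚ 𝔸] [CompleteSpace 𝔸] {X Q P : 𝔸}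
    (hQ : Commute Q X) (hP : SemiconjBy P X (-X)) :
    exp (-X) * (Q + P) * exp X = Q + exp (-(2 • X)) * P := by
  rw [mul_add, add_mul, hQ.exp_neg_mul_mul_exp_eq_self, mul_assoc, hP.exp_right.eq, ← mul_assoc,
    ← NormedSpace.exp_add_of_commute (Commute.refl _), two_nsmul, neg_add]

theorem tendsto_smul_intervalIntegral_add_exp_smul_mul [NormedAlgebra ℝ 𝔸] [CompleteSpace 𝔸]
    {B : 𝔸} (hB : ∃ K, ∀ s : ℝ, ‖exp (s • B)‖ ≤ K) (Q R : 𝔸) :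
    Tendsto (fun t : ℝ => (1 / t) • ∫ s in (0 : ℝ)..t, Q + exp (s • B) * (B * R)) atTop (𝓝 Q) := by
  obtain ⟨K, hK⟩ := hB
  have hexp : ∀ s : ℝ, HasDerivAt (fun t : ℝ => exp (t • B)) (exp (s • B) * B) s :=
    hasDerivAt_exp_smul_const B
  refine tendsto_smul_intervalIntegral_of_hasDerivAt (F := fun t => t • Q + exp (t • B) * R)
    (fun s => ?_) ?_ ⟨K * ‖R‖, fun t => ?_⟩
  · exact (((hasDerivAt_id' s).smul_const Q).add ((hexp s).mul_const R)).congr_deriv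
      (by rw [one_smul, mul_assoc])
  · exact continuous_const.add ((continuous_iff_continuousAt.2 fun s => (hexp s).continuousAt).mul
      continuous_const)
  · rw [add_sub_cancel_left]
    exact (norm_mul_le _ _).trans (mul_le_mul_of_nonneg_right (hK t) (norm_nonneg R))

end BanachAlgebra

namespace Matrix

variable {n 𝕜 : Type*} [Fintype n] [DecidableEq n] [RCLike 𝕜]

theorem linfty_opNorm_le_card_of_mem_unitaryGroup {U : Matrix n n 𝕜}
    (hU : U ∈ unitaryGroup n 𝕜) : ‖U‖ ≤ Fintype.card n := by
  have : ‖U‖₊ ≤ Fintype.card n := by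
    rw [linfty_opNNNorm_def]
    refine Finset.sup_le fun i _ => ?_
    simpa using Finset.sum_le_card_nsmul Finset.univ (fun j => ‖U i j‖₊) 1
      fun j _ => NNReal.coe_le_coe.1 (entry_norm_bound_of_unitary hU i j)
  exact_mod_cast this

theorem exp_mem_unitaryGroup_of_conjTranspose_eq_neg {X : Matrix n n 𝕜} (hX : Xᴴ = -X) :
    exp X ∈ unitaryGroup n 𝕜 := by
  rw [mem_unitaryGroup_iff, star_eq_conjTranspose, ← exp_conjTranspose, hX,
    ← Matrix.exp_add_of_commute _ _ (Commute.refl X).neg_right, add_neg_cancel, exp_zero]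

theorem linfty_opNorm_exp_le_card_of_conjTranspose_eq_neg {X : Matrix n n 𝕜} (hX : Xᴴ = -X) :
    ‖exp X‖ ≤ Fintype.card n :=
  linfty_opNorm_le_card_of_mem_unitaryGroup (exp_mem_unitaryGroup_of_conjTranspose_eq_neg hX)

end Matrix

theorem pauliVec_add (x y : EuclideanSpace ℝ (Fin 3)) :
    pauliVec (x + y) = pauliVec x + pauliVec y := by
  ext i j
  fin_cases i <;> fin_cases j <;> simp [pauliVec, pauli1, pauli2, pauli3] <;> ring

theorem pauliVec_smul (c : ℝ) (x : EuclideanSpace ℝ (Fin 3)) :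
    pauliVec (c • x) = (c : ℂ) • pauliVec x := by
  ext i j
  fin_cases i <;> fin_cases j <;> simp [pauliVec, pauli1, pauli2, pauli3] <;> ring

theorem pauliVec_zero : pauliVec 0 = 0 := by
  simpa using pauliVec_smul 0 0

theorem conjTranspose_pauliVec (x : EuclideanSpace ℝ (Fin 3)) : (pauliVec x)ᴴ = pauliVec x := by
  ext i j
  fin_cases i <;> fin_cases j <;> simp [pauliVec, pauli1, pauli2, pauli3]

theorem pauliVec_mul_add_mul (x y : EuclideanSpace ℝ (Fin 3)) :
    pauliVec x * pauliVec y + pauliVec y * pauliVec x = (2 * (inner ℝ x y : ℂ)) • 1 := by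
  have h : inner ℝ x y = x 0 * y 0 + x 1 * y 1 + x 2 * y 2 := by
    simp only [PiLp.inner_apply, RCLike.inner_apply, Real.ringHom_apply, Fin.sum_univ_three]
    ring
  rw [h]
  ext i j
  fin_cases i <;> fin_cases j <;>
    simp [pauliVec, pauli1, pauli2, pauli3] <;>
    ring_nf <;> simp [Complex.I_sq]

theorem pauliVec_mul_self (x : EuclideanSpace ℝ (Fin 3)) :
    pauliVec x * pauliVec x = ((‖x‖ ^ 2 : ℝ) : ℂ) • 1 := by
  calc pauliVec x * pauliVec x
        = (2 : ℂ)⁻¹ • (pauliVec x * pauliVec x + pauliVec x * pauliVec x) := by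
        rw [← two_smul ℂ, smul_smul, inv_mul_cancel₀ two_ne_zero, one_smul]
    _ = ((‖x‖ ^ 2 : ℝ) : ℂ) • 1 := by
        rw [pauliVec_mul_add_mul, real_inner_self_eq_norm_sq, smul_smul,
          inv_mul_cancel_left₀ two_ne_zero]

theorem semiconjBy_pauliVec_of_inner_eq_zero {x y : EuclideanSpace ℝ (Fin 3)}
    (h : inner ℝ x y = 0) : SemiconjBy (pauliVec x) (pauliVec y) (-pauliVec y) := by
  have := pauliVec_mul_add_mul x y
  rw [h, Complex.ofReal_zero, mul_zero, zero_smul] at this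
  rw [SemiconjBy, neg_mul]
  exact eq_neg_of_add_eq_zero_left this

open scoped Classical in
def asymptoticVelocity (u w : EuclideanSpace ℝ (Fin 3)) : EuclideanSpace ℝ (Fin 3) :=
  if u = 0 then w else (inner ℝ u w / ‖u‖ ^ 2) • u

section AsymptoticVelocity

variable (u w : EuclideanSpace ℝ (Fin 3))

theorem inner_sub_asymptoticVelocity_self : inner ℝ (w - asymptoticVelocity u w) u = 0 := by
  by_cases hu : u = 0
  · simp [hu]
  · rw [asymptoticVelocity, if_neg hu, inner_sub_left, real_inner_smul_left,
      real_inner_self_eq_norm_sq, div_mul_cancel₀ _ (by positivity), real_inner_comm, sub_self]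

theorem commute_pauliVec_asymptoticVelocity :
    Commute (pauliVec (asymptoticVelocity u w)) (pauliVec u) := by
  by_cases hu : u = 0
  · simp [hu, pauliVec_zero]
  · rw [asymptoticVelocity, if_neg hu, pauliVec_smul]
    exact (Commute.refl _).smul_left _

theorem exists_pauliVec_sub_asymptoticVelocity_eq_mul :
    ∃ R, pauliVec (w - asymptoticVelocity u w) = pauliVec u * R := by
  by_cases hu : u = 0
  · exact ⟨0, by simp [asymptoticVelocity, hu, pauliVec_zero]⟩
  · have hu' : ((‖u‖ ^ 2 : ℝ) : ℂ) ≠ 0 := by exact_mod_cast (by positivity)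
    refine ⟨((‖u‖ ^ 2 : ℝ) : ℂ)⁻¹ • (pauliVec u * pauliVec (w - asymptoticVelocity u w)), ?_⟩
    rw [mul_smul_comm, ← mul_assoc, pauliVec_mul_self, smul_mul_assoc, one_mul, smul_smul,
      inv_mul_cancel₀ hu', one_smul]

end AsymptoticVelocity

theorem exp_neg_mul_mul_exp_pauli (u₀ w₀ : ℝ) (u w : EuclideanSpace ℝ (Fin 3)) (z : ℂ) :
    exp (-(z • ((u₀ : ℂ) • (1 : Matrix (Fin 2) (Fin 2) ℂ) + pauliVec u))) *
        ((w₀ : ℂ) • 1 + pauliVec w) * exp (z • ((u₀ : ℂ) • 1 + pauliVec u))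
      = ((w₀ : ℂ) • 1 + pauliVec (asymptoticVelocity u w)) +
          exp (-(2 • (z • pauliVec u))) * pauliVec (w - asymptoticVelocity u w) := by
  have hQ : Commute ((w₀ : ℂ) • 1 + pauliVec (asymptoticVelocity u w)) (z • pauliVec u) :=
    (((Commute.one_left _).smul_left _).add_left
      (commute_pauliVec_asymptoticVelocity u w)).smul_right _
  have hP : SemiconjBy (pauliVec (w - asymptoticVelocity u w)) (z • pauliVec u)
      (-(z • pauliVec u)) := by
    rw [← smul_neg]
    exact (semiconjBy_pauliVec_of_inner_eq_zero (inner_sub_asymptoticVelocity_self u w)).smul_right _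
  rw [smul_add, smul_smul, ← add_sub_cancel (asymptoticVelocity u w) w, pauliVec_add, ← add_assoc,
    add_sub_cancel]
  exact (exp_neg_mul_mul_exp_smul_one_add _ _ _).trans (exp_neg_mul_add_mul_exp hQ hP)


open scoped Classical in
/-- Let `u₀, w₀ ∈ ℝ` and `u, w ∈ ℝ³`, and set `M := u₀σ₀ + u·σ` and
`N := w₀σ₀ + w·σ`.  Then the limit as `t → ∞` of `(1/t)·∫₀ᵗ exp(−isM)·N·exp(isM) ds` exists in
the 2×2 complex matrices and equals `w₀σ₀ + v·σ`, where `v := ((u·w)/‖u‖²)·u` if `u ≠ 0` and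
`v := w` if `u = 0`. -/
theorem stmt_14 (u₀ w₀ : ℝ) (u w : EuclideanSpace ℝ (Fin 3))
    (M N : Matrix (Fin 2) (Fin 2) ℂ)
    (hM : M = (u₀ : ℂ) • (1 : Matrix (Fin 2) (Fin 2) ℂ) + pauliVec u)
    (hN : N = (w₀ : ℂ) • (1 : Matrix (Fin 2) (Fin 2) ℂ) + pauliVec w) :
    Tendsto
      (fun t : ℝ => (1 / t) •
        ∫ s in (0 : ℝ)..t,
          NormedSpace.exp (-((Complex.I * (s : ℂ)) • M)) * N *
            NormedSpace.exp ((Complex.I * (s : ℂ)) • M))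
      atTop
      (nhds ((w₀ : ℂ) • (1 : Matrix (Fin 2) (Fin 2) ℂ) +
        pauliVec (if u = 0 then w else (((inner ℝ u w : ℝ)) / ‖u‖ ^ 2) • u))) := by
  subst hM hN
  obtain ⟨R, hR⟩ := exists_pauliVec_sub_asymptoticVelocity_eq_mul u w
  set B : Matrix (Fin 2) (Fin 2) ℂ := (-2 * Complex.I) • pauliVec u
  have hB : ∃ K, ∀ s : ℝ, ‖exp (s • B)‖ ≤ K := ⟨2, fun s => by
    simpa using linfty_opNorm_exp_le_card_of_conjTranspose_eq_neg
      (by simp [B, conjTranspose_smul, conjTranspose_pauliVec] : (s • B)ᴴ = -(s • B))⟩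
  have hR' : B * ((Complex.I / 2) • R) = pauliVec u * R := by
    rw [smul_mul_smul_comm, show -2 * Complex.I * (Complex.I / 2) = 1 by ring_nf; simp, one_smul]
  refine (tendsto_smul_intervalIntegral_add_exp_smul_mul hB _ ((Complex.I / 2) • R)).congr
    fun t => ?_
  refine congrArg _ (intervalIntegral.integral_congr fun s _ => ?_)
  rw [exp_neg_mul_mul_exp_pauli, hR', ← hR]
  congr 3
  module
end
end

section
/- Let u₀, u₁, u₂ be odd real trigonometric polynomials and u₃ an even real trigonometric polynomial, with u₀ not identically zero and (u₁, u₂, u₃) not all identically zero. Write u² := u₁² + u₂² + u₃² and uu' := u₁u₁' + u₂u₂' + u₃u₃'. Then u₀'(k)²·u²(k) = (uu')(k)² for all k ∈ ℝ if and only if u₀(k)² = u²(k) for all k ∈ ℝ. -/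
/-!
Where `S := u₁² + u₂² + u₃²` is positive, the identity says `(√S)'² = u₀'²`. Both derivatives
are real analytic (trigonometric polynomials are), so near a point with `S > 0` one of
`(√S)' = ±u₀'` holds identically; hence `S = (u₀ + d)²` near that point, and everywhere by the
identity theorem. Since `S` is even and `u₀` is odd and nonzero, `d = 0`. The converse is just
differentiating `u₀² = S`.
-/

/-- A real trigonometric polynomial: a function of the form
`k ↦ a₀ + Σ_{n=1}^{N} (aₙ cos(nk) + bₙ sin(nk))` with real coefficients. -/
def IsRealTrigPoly (f : ℝ → ℝ) : Prop :=
  ∃ (N : ℕ) (a b : ℕ → ℝ), ∀ k : ℝ,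
    f k = a 0 + ∑ n ∈ Finset.Icc 1 N, (a n * Real.cos (n * k) + b n * Real.sin (n * k))

open Filter Topology Set

theorem IsRealTrigPoly.analyticOnNhd {f : ℝ → ℝ} (hf : IsRealTrigPoly f) :
    AnalyticOnNhd ℝ f univ := by
  obtain ⟨N, a, b, h⟩ := hf
  rw [funext h]
  intro x _
  fun_prop

theorem IsRealTrigPoly.differentiable {f : ℝ → ℝ} (hf : IsRealTrigPoly f) :
    Differentiable ℝ f := fun x => (hf.analyticOnNhd x trivial).differentiableAt

theorem AnalyticAt.eventuallyEq_or_eventuallyEq_neg_of_sq_eq {𝕜 : Type*}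
    [NontriviallyNormedField 𝕜] {f g : 𝕜 → 𝕜} {x : 𝕜} (hf : AnalyticAt 𝕜 f x)
    (hg : AnalyticAt 𝕜 g x) (h : ∀ᶠ y in 𝓝 x, f y ^ 2 = g y ^ 2) :
    f =ᶠ[𝓝 x] g ∨ f =ᶠ[𝓝 x] -g := by
  refine (hf.eventually_eq_or_eventually_ne hg).imp id fun hne => ?_
  refine (hf.frequently_eq_iff_eventually_eq hg.neg).1 (Eventually.frequently ?_)
  filter_upwards [hne, nhdsWithin_le_nhds h] with y hne hsq
  exact (sq_eq_sq_iff_eq_or_eq_neg.1 hsq).resolve_left hne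

theorem exists_eventuallyEq_add_of_deriv_eventuallyEq {E : Type*} [NormedAddCommGroup E]
    [NormedSpace ℝ E] {f g : ℝ → E} {x : ℝ} (hf : ∀ᶠ y in 𝓝 x, DifferentiableAt ℝ f y)
    (hg : ∀ᶠ y in 𝓝 x, DifferentiableAt ℝ g y) (h : deriv f =ᶠ[𝓝 x] deriv g) :
    ∃ a, f =ᶠ[𝓝 x] (g · + a) := by
  obtain ⟨r, hr, hball⟩ := Metric.eventually_nhds_iff_ball.1 (hf.and (hg.and h))
  obtain ⟨a, ha⟩ := Metric.isOpen_ball.exists_eq_add_of_deriv_eq (convex_ball x r).isPreconnected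
    (fun y hy => (hball y hy).1.differentiableWithinAt)
    (fun y hy => (hball y hy).2.1.differentiableWithinAt) fun y hy => (hball y hy).2.2
  exact ⟨a, eventually_of_mem (Metric.ball_mem_nhds x hr) ha⟩

theorem exists_eventuallyEq_add_sq_of_sq_deriv_mul_eq {S u : ℝ → ℝ} {k₀ : ℝ}
    (hS : AnalyticAt ℝ S k₀) (hu : AnalyticAt ℝ u k₀) (hS₀ : 0 < S k₀)
    (h : ∀ᶠ k in 𝓝 k₀, deriv u k ^ 2 * S k = (deriv S k / 2) ^ 2) :
    ∃ d, S =ᶠ[𝓝 k₀] fun k => (u k + d) ^ 2 := by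
  set v : ℝ → ℝ := fun k => √(S k)
  have hv : AnalyticAt ℝ v k₀ := (hS.contDiffAt.sqrt hS₀.ne').analyticAt
  have hSpos : ∀ᶠ k in 𝓝 k₀, 0 < S k := continuousAt_const.eventually_lt hS.continuousAt hS₀
  have hvsq : ∀ᶠ k in 𝓝 k₀, S k = v k ^ 2 := hSpos.mono fun k hk => (Real.sq_sqrt hk.le).symm
  have hderiv_sq : ∀ᶠ k in 𝓝 k₀, deriv v k ^ 2 = deriv u k ^ 2 := by
    filter_upwards [hS.eventually_analyticAt, hSpos, h] with k hSk hpos hk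
    rw [(hSk.differentiableAt.hasDerivAt.sqrt hpos.ne').deriv, div_pow, mul_pow,
      Real.sq_sqrt hpos.le, div_eq_iff (by positivity)]
    linear_combination -4 * hk
  have hvd := hv.eventually_analyticAt.mono fun _ h => h.differentiableAt
  have hud := hu.eventually_analyticAt.mono fun _ h => h.differentiableAt
  rcases hv.deriv.eventuallyEq_or_eventuallyEq_neg_of_sq_eq hu.deriv hderiv_sq with hpos | hneg
  · obtain ⟨a, ha⟩ := exists_eventuallyEq_add_of_deriv_eventuallyEq hvd hud hpos
    refine ⟨a, ?_⟩
    filter_upwards [hvsq, ha] with k hk hak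
    rw [hk, hak]
  · have hneg' : deriv v =ᶠ[𝓝 k₀] deriv (-u) := by
      rwa [deriv.neg']
    obtain ⟨a, ha⟩ := exists_eventuallyEq_add_of_deriv_eventuallyEq hvd
      (hud.mono fun _ h => h.neg) hneg'
    refine ⟨-a, ?_⟩
    filter_upwards [hvsq, ha] with k hk hak
    rw [hk, hak, Pi.neg_apply]
    ring

theorem exists_eq_add_sq_of_sq_deriv_mul_eq {S u : ℝ → ℝ} {k₀ : ℝ}
    (hS : AnalyticOnNhd ℝ S univ) (hu : AnalyticOnNhd ℝ u univ) (hS₀ : 0 < S k₀)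
    (h : ∀ k, deriv u k ^ 2 * S k = (deriv S k / 2) ^ 2) :
    ∃ d, S = fun k => (u k + d) ^ 2 := by
  obtain ⟨d, hd⟩ := exists_eventuallyEq_add_sq_of_sq_deriv_mul_eq (hS k₀ trivial) (hu k₀ trivial)
    hS₀ (Eventually.of_forall h)
  exact ⟨d, hS.eq_of_eventuallyEq ((hu.add analyticOnNhd_const).pow 2) hd⟩

theorem sq_deriv_mul_eq_of_eq_sq {S u : ℝ → ℝ} (hu : Differentiable ℝ u)
    (hSu : S = fun k => u k ^ 2) (k : ℝ) : deriv u k ^ 2 * S k = (deriv S k / 2) ^ 2 := by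
  subst hSu
  rw [deriv_fun_pow (hu k)]
  ring

theorem eq_zero_of_even_eq_add_sq {S u : ℝ → ℝ} {d : ℝ} (hS : Function.Even S)
    (hu : Function.Odd u) (hu₀ : ¬ ∀ k, u k = 0) (hSu : S = fun k => (u k + d) ^ 2) :
    d = 0 := by
  obtain ⟨k, hk⟩ := not_forall.1 hu₀
  have h := hS k
  rw [hSu] at h
  simp only [hu k] at h
  have : 4 * d * u k = 0 := by linear_combination -h
  simpa [hk] using this

/-- Let `u₀, u₁, u₂` be odd and `u₃` an even real trigonometric polynomial,
with `u₀` not identically zero and `(u₁, u₂, u₃)` not all identically zero.  Writing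
`u² := u₁² + u₂² + u₃²` and `uu' := u₁u₁' + u₂u₂' + u₃u₃'`, one has
`u₀'(k)²·u²(k) = (uu')(k)²` for all `k ∈ ℝ` if and only if `u₀(k)² = u²(k)` for all `k ∈ ℝ`. -/
theorem stmt_16 (u₀ u₁ u₂ u₃ : ℝ → ℝ)
    (h₀ : IsRealTrigPoly u₀) (h₁ : IsRealTrigPoly u₁)
    (h₂ : IsRealTrigPoly u₂) (h₃ : IsRealTrigPoly u₃)
    (hodd₀ : ∀ k : ℝ, u₀ (-k) = -u₀ k)
    (hodd₁ : ∀ k : ℝ, u₁ (-k) = -u₁ k)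
    (hodd₂ : ∀ k : ℝ, u₂ (-k) = -u₂ k)
    (heven₃ : ∀ k : ℝ, u₃ (-k) = u₃ k)
    (hu₀ : ¬ ∀ k : ℝ, u₀ k = 0)
    (hu : ¬ ∀ k : ℝ, u₁ k = 0 ∧ u₂ k = 0 ∧ u₃ k = 0) :
    (∀ k : ℝ, (deriv u₀ k) ^ 2 * (u₁ k ^ 2 + u₂ k ^ 2 + u₃ k ^ 2) =
        (u₁ k * deriv u₁ k + u₂ k * deriv u₂ k + u₃ k * deriv u₃ k) ^ 2) ↔
      (∀ k : ℝ, u₀ k ^ 2 = u₁ k ^ 2 + u₂ k ^ 2 + u₃ k ^ 2) := by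
  set S : ℝ → ℝ := fun k => u₁ k ^ 2 + u₂ k ^ 2 + u₃ k ^ 2 with hS
  have hSa : AnalyticOnNhd ℝ S univ :=
    ((h₁.analyticOnNhd.pow 2).add (h₂.analyticOnNhd.pow 2)).add (h₃.analyticOnNhd.pow 2)
  have hS' : ∀ k, deriv S k / 2 = u₁ k * deriv u₁ k + u₂ k * deriv u₂ k + u₃ k * deriv u₃ k := by
    intro k
    have := (((h₁.differentiable k).hasDerivAt.fun_pow 2).fun_add
      ((h₂.differentiable k).hasDerivAt.fun_pow 2)).fun_add
        ((h₃.differentiable k).hasDerivAt.fun_pow 2)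
    rw [this.deriv]
    ring
  suffices (∀ k, deriv u₀ k ^ 2 * S k = (deriv S k / 2) ^ 2) ↔ (fun k => u₀ k ^ 2) = S by
    simpa only [hS', funext_iff] using this
  constructor
  · intro h
    obtain ⟨k₁, hk₁⟩ := not_forall.1 hu
    have hS₀ : 0 < S k₁ := by
      contrapose! hk₁
      refine ⟨?_, ?_, ?_⟩ <;> nlinarith [sq_nonneg (u₁ k₁), sq_nonneg (u₂ k₁), sq_nonneg (u₃ k₁)]
    obtain ⟨d, hd⟩ := exists_eq_add_sq_of_sq_deriv_mul_eq hSa h₀.analyticOnNhd hS₀ h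
    have hS_even : Function.Even S := fun k => by simp only [hS, hodd₁, hodd₂, heven₃]; ring
    obtain rfl := eq_zero_of_even_eq_add_sq hS_even hodd₀ hu₀ hd
    simpa using hd.symm
  · exact fun h => sq_deriv_mul_eq_of_eq_sq h₀.differentiable h.symm
end

section
/- Let e : ℝ → ℝ be continuous on [−π, π] with e(−π) = e(π), let S ⊆ (−π, π) be a finite set, and let w : ℝ → ℝ be a measurable function, bounded on (−π, π) \ S, such that for every k ∈ (−π, π) \ S the function e is differentiable at k with derivative e'(k) = w(k). Let ρ : ℝ → ℝ be bounded and Borel measurable and let β ∈ ℝ. Then ∫_{−π}^{π} e(k)·w(k)·ρ(β·e(k)) dk = 0. -/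
/-!
Let `ν₊` and `ν₋` be the images under `e` of the measures `w⁺ dk` and `w⁻ dk` on
`(−π, π)`. For continuous `g`, the fundamental theorem of calculus (valid off the finite set
`S`) and periodicity of `e` give `∫ g(e) w dk = G(e(π)) − G(e(−π)) = 0` for a primitive `G`
of `g`, i.e. `ν₊` and `ν₋` integrate all bounded continuous functions alike. Two finite Borel
measures with this property are equal, so `∫ h(e) w dk = ∫ h dν₊ − ∫ h dν₋ = 0` for every
measurable `h` with `h(e) w` integrable, in particular for `h(y) = y ρ(βy)`.
-/

open MeasureTheory Real Set BoundedContinuousFunction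

theorem intervalIntegral.integral_comp_mul_eq_of_hasDerivAt_off_countable {a b : ℝ}
    (hab : a ≤ b) {e w g : ℝ → ℝ} {S : Set ℝ} (hS : S.Countable)
    (he : ContinuousOn e (Icc a b)) (hderiv : ∀ k ∈ Ioo a b \ S, HasDerivAt e (w k) k)
    (hg : Continuous g) (hint : IntervalIntegrable (fun k => g (e k) * w k) volume a b) :
    ∫ k in a..b, g (e k) * w k = ∫ y in e a..e b, g y := by
  have hG (y : ℝ) : HasDerivAt (fun u => ∫ t in e a..u, g t) (g y) y :=
    (hg.integral_hasStrictDerivAt _ _).hasDerivAt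
  have hGc : Continuous fun u => ∫ t in e a..u, g t :=
    continuous_iff_continuousAt.2 fun y => (hG y).continuousAt
  rw [integral_eq_of_hasDerivAt_off_countable_of_le _ _ hab hS (hGc.comp_continuousOn he)
    (fun k hk => (hG (e k)).comp k (hderiv k hk)) hint]
  simp

section PushforwardDensity

variable {α X : Type*} [MeasurableSpace α] [MeasurableSpace X] {μ : Measure α} {e : α → X}
  {w : α → ℝ}

/-- The image under `e` of the measure `w⁺ dμ`; the image of the signed measure `w dμ` is
`pushforwardDensity μ e w - pushforwardDensity μ e (-w)`. -/
noncomputable def pushforwardDensity (μ : Measure α) (e : α → X) (w : α → ℝ) : Measure X :=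
  (μ.withDensity fun x => ENNReal.ofReal (w x)).map e

theorem isFiniteMeasure_pushforwardDensity (hw : Integrable w μ) :
    IsFiniteMeasure (pushforwardDensity μ e w) :=
  haveI := isFiniteMeasure_withDensity_ofReal hw.2
  Measure.isFiniteMeasure_map _ _

theorem integral_pushforwardDensity (he : AEMeasurable e μ) (hw : AEMeasurable w μ)
    {g : X → ℝ} (hg : Measurable g) :
    ∫ y, g y ∂pushforwardDensity μ e w = ∫ x, max (w x) 0 * g (e x) ∂μ := by
  rw [pushforwardDensity, integral_map (he.mono_ac (withDensity_absolutelyContinuous _ _))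
      hg.aestronglyMeasurable,
    integral_withDensity_eq_integral_toReal_smul₀ hw.ennreal_ofReal
      (ae_of_all _ fun _ => ENNReal.ofReal_lt_top)]
  simp only [ENNReal.toReal_ofReal', smul_eq_mul]

theorem integral_pushforwardDensity_sub_neg (he : AEMeasurable e μ) (hw : Integrable w μ)
    {g : X → ℝ} (hg : Measurable g) (hgw : Integrable (fun x => g (e x) * w x) μ) :
    ∫ y, g y ∂pushforwardDensity μ e w - ∫ y, g y ∂pushforwardDensity μ e (-w) =
      ∫ x, g (e x) * w x ∂μ := by
  have hint (v : α → ℝ) (hv : AEMeasurable v μ) (hvw : ∀ x, |v x| ≤ |w x|) :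
      Integrable (fun x => max (v x) 0 * g (e x)) μ := by
    refine hgw.mono
      ((hv.max aemeasurable_const).mul (hg.comp_aemeasurable he)).aestronglyMeasurable
      (ae_of_all _ fun x => ?_)
    simp only [norm_mul, norm_eq_abs, mul_comm |g (e x)|]
    refine mul_le_mul_of_nonneg_right ?_ (abs_nonneg _)
    rw [abs_of_nonneg (le_max_right _ _)]
    exact (max_le (le_abs_self _) (abs_nonneg _)).trans (hvw x)
  rw [integral_pushforwardDensity he hw.aemeasurable hg,
    integral_pushforwardDensity he hw.aemeasurable.neg hg,
    ← integral_sub (hint w hw.aemeasurable fun _ => le_rfl)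
      (hint (-w) hw.aemeasurable.neg fun x => (abs_neg (w x)).le)]
  congr 1 with x
  rw [← sub_mul, Pi.neg_apply, max_zero_sub_eq_self, mul_comm]

variable [TopologicalSpace X] [BorelSpace X] [HasOuterApproxClosed X]

theorem pushforwardDensity_eq_neg_of_forall_integral_eq_zero (he : AEMeasurable e μ)
    (hw : Integrable w μ) (h : ∀ φ : X →ᵇ ℝ, ∫ x, φ (e x) * w x ∂μ = 0) :
    pushforwardDensity μ e w = pushforwardDensity μ e (-w) := by
  have := isFiniteMeasure_pushforwardDensity (e := e) hw
  have := isFiniteMeasure_pushforwardDensity (e := e) hw.neg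
  refine ext_of_forall_integral_eq_of_IsFiniteMeasure fun g => sub_eq_zero.1 ?_
  have hgw : Integrable (fun x => g (e x) * w x) μ :=
    hw.bdd_mul (g.continuous.measurable.comp_aemeasurable he).aestronglyMeasurable
      (ae_of_all _ fun x => g.norm_coe_le_norm (e x))
  rw [integral_pushforwardDensity_sub_neg he hw g.continuous.measurable hgw, h g]

theorem integral_comp_mul_eq_zero_of_forall_boundedContinuous (he : AEMeasurable e μ)
    (hw : Integrable w μ) (h : ∀ φ : X →ᵇ ℝ, ∫ x, φ (e x) * w x ∂μ = 0) {g : X → ℝ}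
    (hg : Measurable g) (hgw : Integrable (fun x => g (e x) * w x) μ) :
    ∫ x, g (e x) * w x ∂μ = 0 := by
  rw [← integral_pushforwardDensity_sub_neg he hw hg hgw,
    pushforwardDensity_eq_neg_of_forall_integral_eq_zero he hw h, sub_self]

end PushforwardDensity

theorem intervalIntegral.integral_comp_mul_eq_zero_of_hasDerivAt_off_countable {a b : ℝ}
    (hab : a ≤ b) {e w g : ℝ → ℝ} {S : Set ℝ} (hS : S.Countable)
    (he : ContinuousOn e (Icc a b)) (he_eq : e a = e b)
    (hderiv : ∀ k ∈ Ioo a b \ S, HasDerivAt e (w k) k) (hw : IntegrableOn w (Ioo a b))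
    (hg : Measurable g) (hgw : IntegrableOn (fun k => g (e k) * w k) (Ioo a b)) :
    ∫ k in a..b, g (e k) * w k = 0 := by
  have he_meas : AEMeasurable e (volume.restrict (Ioo a b)) :=
    (he.mono Ioo_subset_Icc_self).aemeasurable measurableSet_Ioo
  have hcont (φ : ℝ →ᵇ ℝ) : ∫ k in Ioo a b, φ (e k) * w k = 0 := by
    have hφw : IntegrableOn (fun k => φ (e k) * w k) (Ioo a b) :=
      hw.bdd_mul (φ.continuous.measurable.comp_aemeasurable he_meas).aestronglyMeasurable
        (ae_of_all _ fun k => φ.norm_coe_le_norm (e k))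
    rw [← integral_Ioc_eq_integral_Ioo, ← integral_of_le hab,
      integral_comp_mul_eq_of_hasDerivAt_off_countable hab hS he hderiv φ.continuous
        ((intervalIntegrable_iff_integrableOn_Ioo_of_le hab).2 hφw),
      he_eq, integral_same]
  rw [integral_of_le hab, integral_Ioc_eq_integral_Ioo]
  exact integral_comp_mul_eq_zero_of_forall_boundedContinuous he_meas hw hcont hg hgw

theorem stmt_18_general (e w ρ : ℝ → ℝ) (S : Set ℝ) (β : ℝ)
    (he_cont : ContinuousOn e (Set.Icc (-π) π))
    (he_per : e (-π) = e π)
    (hS_fin : S.Finite)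
    (hw_meas : Measurable w)
    (hw_bdd : ∃ C : ℝ, ∀ k ∈ Set.Ioo (-π) π \ S, |w k| ≤ C)
    (hderiv : ∀ k ∈ Set.Ioo (-π) π \ S, HasDerivAt e (w k) k)
    (hρ_meas : Measurable ρ)
    (hρ_bdd : ∃ C : ℝ, ∀ x : ℝ, |ρ x| ≤ C) :
    ∫ k in (-π)..π, e k * w k * ρ (β * e k) = 0 := by
  obtain ⟨Cw, hCw⟩ := hw_bdd
  obtain ⟨Ce, hCe⟩ := isCompact_Icc.exists_bound_of_continuousOn he_cont
  obtain ⟨Cρ, hCρ⟩ := hρ_bdd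
  have hw_int : IntegrableOn w (Ioo (-π) π) := by
    refine Measure.integrableOn_of_bounded (M := Cw) measure_Ioo_lt_top.ne
      hw_meas.aestronglyMeasurable ?_
    filter_upwards [ae_restrict_mem measurableSet_Ioo,
      ae_restrict_of_ae (measure_eq_zero_iff_ae_notMem.1 (hS_fin.measure_zero volume))]
      with k hk hkS using hCw k ⟨hk, hkS⟩
  have hh_meas : Measurable fun y => y * ρ (β * y) := by fun_prop
  have hhw : IntegrableOn (fun k => e k * ρ (β * e k) * w k) (Ioo (-π) π) := by
    refine hw_int.bdd_mul (c := Ce * Cρ) (hh_meas.comp_aemeasurable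
      ((he_cont.mono Ioo_subset_Icc_self).aemeasurable measurableSet_Ioo)).aestronglyMeasurable ?_
    filter_upwards [ae_restrict_mem measurableSet_Ioo] with k hk
    have hek := hCe k (Ioo_subset_Icc_self hk)
    rw [norm_mul, norm_eq_abs (ρ _)]
    exact mul_le_mul hek (hCρ _) (abs_nonneg _) ((norm_nonneg _).trans hek)
  simpa only [mul_right_comm _ (w _)] using
    intervalIntegral.integral_comp_mul_eq_zero_of_hasDerivAt_off_countable (by linarith [pi_pos])
      hS_fin.countable he_cont he_per hderiv hw_int hh_meas hhw

/-- Let `e : ℝ → ℝ` be continuous on `[−π, π]` with `e(−π) = e(π)`, let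
`S ⊆ (−π, π)` be a finite set, and let `w : ℝ → ℝ` be a measurable function, bounded on
`(−π, π) \ S`, such that for every `k ∈ (−π, π) \ S` the function `e` is differentiable at `k`
with derivative `e'(k) = w(k)`.  Let `ρ : ℝ → ℝ` be bounded and Borel measurable and let
`β ∈ ℝ`.  Then `∫_{−π}^{π} e(k)·w(k)·ρ(β·e(k)) dk = 0`. -/
theorem stmt_18 (e w ρ : ℝ → ℝ) (S : Set ℝ) (β : ℝ)
    (he_cont : ContinuousOn e (Set.Icc (-π) π))
    (he_per : e (-π) = e π)
    (hS_fin : S.Finite) (hS_sub : S ⊆ Set.Ioo (-π) π)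
    (hw_meas : Measurable w)
    (hw_bdd : ∃ C : ℝ, ∀ k ∈ Set.Ioo (-π) π \ S, |w k| ≤ C)
    (hderiv : ∀ k ∈ Set.Ioo (-π) π \ S, HasDerivAt e (w k) k)
    (hρ_meas : Measurable ρ)
    (hρ_bdd : ∃ C : ℝ, ∀ x : ℝ, |ρ x| ≤ C) :
    ∫ k in (-π)..π, e k * w k * ρ (β * e k) = 0 :=
  stmt_18_general e w ρ S β he_cont he_per hS_fin hw_meas hw_bdd hderiv hρ_meas hρ_bdd
end
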